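/- Let A, B, W, H, G, D be random variables taking values in finite sets such that H(G | (A, H)) = 0 (the sender's message G is a.s. a function of its data A and the past transcript H) and H(D | (H, G, W, B)) = 0 (the receiver's reply D is a.s. a function of the past transcript (H, G) and its data (W, B)). Then I(A; B | (H, G, D, W)) ≤ I(A; B | (H, W)). Consequently, if I(A; B | (H, W)) = 0 then I(A; B | (H, G, D, W)) = 0: one round of public communication preserves conditional independence of the parties' private data. -/

import Mathlib

open scoped BigOperators Classical

noncomputable section

namespace OT

variable {Ω : Type*} [Fintype Ω]

/-- Probability of an event under a pmf on a finite sample space. -/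
def pr (μ : Ω → ℝ) (s : Set Ω) : ℝ := ∑ ω, s.indicator μ ω

/-- `q` is a probability mass function on a finite type. -/
def isDist {α : Type*} [Fintype α] (q : α → ℝ) : Prop := (∀ a, 0 ≤ q a) ∧ ∑ a, q a = 1

/-- Distribution (pmf) of a random variable. -/
def dst {α : Type*} (μ : Ω → ℝ) (X : Ω → α) : α → ℝ := fun a => pr μ {ω | X ω = a}

/-- Joint distribution of two random variables. -/
def jd {α β : Type*} (μ : Ω → ℝ) (X : Ω → α) (Y : Ω → β) : α × β → ℝ :=
  fun q => pr μ {ω | X ω = q.1 ∧ Y ω = q.2}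

/-- Conditional pmf given an event. -/
def cnd (μ : Ω → ℝ) (s : Set Ω) : Ω → ℝ := fun ω => s.indicator μ ω / pr μ s

/-- Shannon entropy (in bits) of a pmf on a finite type. -/
def entD {α : Type*} [Fintype α] (q : α → ℝ) : ℝ := ∑ a, -(q a * Real.logb 2 (q a))

/-- Shannon entropy (in bits) of a random variable. -/
def ent {α : Type*} [Fintype α] (μ : Ω → ℝ) (X : Ω → α) : ℝ := entD (dst μ X)

/-- Conditional Shannon entropy `H(X|Y)` (in bits). -/
def condEnt {α β : Type*} [Fintype α] [Fintype β] (μ : Ω → ℝ) (X : Ω → α) (Y : Ω → β) : ℝ :=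
  ent μ (fun ω => (X ω, Y ω)) - ent μ Y

/-- Mutual information `I(X;Y)` (in bits). -/
def mi {α β : Type*} [Fintype α] [Fintype β] (μ : Ω → ℝ) (X : Ω → α) (Y : Ω → β) : ℝ :=
  ent μ X + ent μ Y - ent μ (fun ω => (X ω, Y ω))

/-- Conditional mutual information `I(X;Y|Z)` (in bits). -/
def cmi {α β γ : Type*} [Fintype α] [Fintype β] [Fintype γ]
    (μ : Ω → ℝ) (X : Ω → α) (Y : Ω → β) (Z : Ω → γ) : ℝ :=
  ent μ (fun ω => (X ω, Z ω)) + ent μ (fun ω => (Y ω, Z ω))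
    - ent μ (fun ω => (X ω, Y ω, Z ω)) - ent μ Z

/-- Rényi entropy of order two (in bits). -/
def ren2 {α : Type*} [Fintype α] (μ : Ω → ℝ) (X : Ω → α) : ℝ :=
  Real.logb 2 (1 / ∑ a, (dst μ X a) ^ 2)

/-- Statistical (total variation) distance between two pmfs. -/
def sd {α : Type*} [Fintype α] (q q' : α → ℝ) : ℝ := (∑ a, |q a - q' a|) / 2

/-- Conditional min-entropy `H∞(X|Y)` of a joint pmf (in bits):
the minimum over `(a,b)` in the support of `log₂ (P(Y=b) / P(X=a, Y=b))`. -/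
def minEnt {α β : Type*} [Fintype α] [Fintype β] (q : α × β → ℝ) : ℝ :=
  sInf {r | ∃ a b, 0 < q (a, b) ∧ r = Real.logb 2 ((∑ a', q (a', b)) / q (a, b))}

/-- `ε`-smooth conditional min-entropy of a joint pmf (in bits). -/
def sminEnt {α β : Type*} [Fintype α] [Fintype β] (q : α × β → ℝ) (ε : ℝ) : ℝ :=
  sSup {r | ∃ q' : α × β → ℝ, isDist q' ∧ sd q q' ≤ ε ∧ r = minEnt q'}

/-- Conditional zero-entropy `H₀(X|Y)` of a joint pmf (in bits). -/
def zeroEnt {α β : Type*} [Fintype α] [Fintype β] (q : α × β → ℝ) : ℝ :=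
  sSup {r | ∃ b, 0 < ∑ a, q (a, b) ∧
    r = Real.logb 2 ((Finset.univ.filter fun a => 0 < q (a, b)).card)}

end OT

open OT
/-!
Write `h` for entropy. If `G` is a function of `(X, Z)` then `h(X, G, Z) = h(X, Z)` and
`h(X, Y, G, Z) = h(X, Y, Z)`, so
`I(X;Y|Z) - I(X;Y|G,Z) = h(G,Z) + h(Y,Z) - h(G,Y,Z) - h(Z) = I(G;Y|Z) ≥ 0`.
The message `G` is a function of `(A, H, W)`, so conditioning on it does not increase `I(A;B|H,W)`;
the reply `D` is a function of `(B, G, H, W)`, and the same step with `A` and `B` exchanged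
absorbs it. Nonnegativity of conditional mutual information is Gibbs' inequality comparing
`p(x,y,z)` with `p(x,z) p(y,z) / p(z)`.
-/

lemma sum_mul_log_sub_log_nonneg {ι : Type*} [Fintype ι] {p q : ι → ℝ} (hp : ∀ i, 0 ≤ p i)
    (hq : ∀ i, 0 ≤ q i) (hpq : ∀ i, 0 < p i → 0 < q i) (hsum : ∑ i, q i ≤ ∑ i, p i) :
    0 ≤ ∑ i, p i * (Real.log (p i) - Real.log (q i)) := by
  have pointwise : ∀ i, p i - q i ≤ p i * (Real.log (p i) - Real.log (q i)) := by
    intro i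
    rcases (hp i).eq_or_lt with h0 | hpos
    · simp [← h0, hq i]
    · have hlog := Real.log_le_sub_one_of_pos (div_pos (hpq i hpos) hpos)
      rw [Real.log_div (hpq i hpos).ne' hpos.ne'] at hlog
      have := mul_le_mul_of_nonneg_left hlog hpos.le
      rw [mul_sub, mul_sub, mul_div_cancel₀ _ hpos.ne'] at this
      linarith
  calc (0 : ℝ) ≤ ∑ i, (p i - q i) := by rw [Finset.sum_sub_distrib]; linarith
    _ ≤ _ := Finset.sum_le_sum fun i _ => pointwise i

namespace OT

variable {Ω : Type*} [Fintype Ω] (μ : Ω → ℝ)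

lemma sum_dst_mul {α : Type*} [Fintype α] (X : Ω → α) (g : α → ℝ) :
    ∑ a, dst μ X a * g a = ∑ ω, μ ω * g (X ω) := by
  simp only [dst, pr, Finset.sum_mul, Set.indicator_apply, Set.mem_ofPred_eq, ite_mul, zero_mul]
  rw [Finset.sum_comm]
  simp

lemma sum_dst {α : Type*} [Fintype α] (X : Ω → α) : ∑ a, dst μ X a = ∑ ω, μ ω := by
  simpa using sum_dst_mul μ X 1

lemma sum_dst_prod_left {α β : Type*} [Fintype α] (X : Ω → α) (Y : Ω → β) (b : β) :
    ∑ a, dst μ (fun ω => (X ω, Y ω)) (a, b) = dst μ Y b := by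
  simp only [dst, pr, Set.indicator_apply, Set.mem_ofPred_eq, Prod.mk.injEq]
  rw [Finset.sum_comm]
  refine Finset.sum_congr rfl fun ω _ => ?_
  by_cases hY : Y ω = b <;> simp [hY]

lemma dst_comp_of_injective {α β : Type*} (X : Ω → α) {e : α → β} (he : e.Injective) (a : α) :
    dst μ (fun ω => e (X ω)) (e a) = dst μ X a := by
  simp only [dst, he.eq_iff]

variable {μ} in
lemma dst_nonneg (hμ : ∀ ω, 0 ≤ μ ω) {α : Type*} (X : Ω → α) (a : α) : 0 ≤ dst μ X a :=
  Finset.sum_nonneg fun ω _ => Set.indicator_nonneg (fun ω _ => hμ ω) ω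

variable {μ} in
lemma dst_le_dst_comp (hμ : ∀ ω, 0 ≤ μ ω) {α β : Type*} (X : Ω → α) (f : α → β) (a : α) :
    dst μ X a ≤ dst μ (fun ω => f (X ω)) (f a) :=
  Finset.sum_le_sum fun ω _ =>
    Set.indicator_le_indicator_of_subset (fun ω (h : X ω = a) => congrArg f h) (fun ω => hμ ω) ω

lemma ent_eq_neg_sum_mul_log {α : Type*} [Fintype α] (X : Ω → α) :
    ent μ X = -(∑ ω, μ ω * Real.log (dst μ X (X ω))) / Real.log 2 := by
  rw [← sum_dst_mul μ X fun a => Real.log (dst μ X a), neg_div, Finset.sum_div,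
    ← Finset.sum_neg_distrib]
  simp only [ent, entD, Real.logb, mul_div_assoc]

lemma ent_comp_of_injective {α β : Type*} [Fintype α] [Fintype β] (X : Ω → α) {e : α → β}
    (he : e.Injective) : ent μ (fun ω => e (X ω)) = ent μ X := by
  simp only [ent_eq_neg_sum_mul_log, dst_comp_of_injective μ X he]

lemma ent_left_comm {α β γ : Type*} [Fintype α] [Fintype β] [Fintype γ]
    (X : Ω → α) (Y : Ω → β) (Z : Ω → γ) :
    ent μ (fun ω => (X ω, Y ω, Z ω)) = ent μ (fun ω => (Y ω, X ω, Z ω)) :=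
  ent_comp_of_injective μ (fun ω => (Y ω, X ω, Z ω))
    (e := fun t => (t.2.1, t.1, t.2.2)) (Function.HasLeftInverse.injective
      ⟨fun t => (t.2.1, t.1, t.2.2), fun _ => rfl⟩)

/-- The law `p(x,z) p(y,z) / p(z)` under which `X` and `Y` are conditionally independent given
`Z`; where `p(z) = 0` division by zero gives the correct value `0`. -/
def condProdDist {α β γ : Type*} (X : Ω → α) (Y : Ω → β) (Z : Ω → γ) : α × β × γ → ℝ :=
  fun t => dst μ (fun ω => (X ω, Z ω)) (t.1, t.2.2) * dst μ (fun ω => (Y ω, Z ω)) t.2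
    / dst μ Z t.2.2

section CondProdDist

variable {α β γ : Type*} (X : Ω → α) (Y : Ω → β) (Z : Ω → γ)

lemma sum_condProdDist [Fintype α] [Fintype β] [Fintype γ] :
    ∑ t, condProdDist μ X Y Z t = ∑ ω, μ ω := by
  calc ∑ t, condProdDist μ X Y Z t
      = ∑ c, ∑ a, ∑ b, dst μ (fun ω => (X ω, Z ω)) (a, c) * dst μ (fun ω => (Y ω, Z ω)) (b, c)
          / dst μ Z c := by
        simp only [condProdDist, Fintype.sum_prod_type]
        exact (Finset.sum_congr rfl fun _ _ => Finset.sum_comm).trans Finset.sum_comm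
    _ = ∑ c, dst μ Z c * dst μ Z c / dst μ Z c := by
        simp only [← Finset.sum_div, ← Finset.sum_mul_sum, sum_dst_prod_left]
    _ = ∑ ω, μ ω := by simp only [mul_self_div_self, sum_dst]

variable {μ}

lemma condProdDist_nonneg (hμ : ∀ ω, 0 ≤ μ ω) (t : α × β × γ) : 0 ≤ condProdDist μ X Y Z t :=
  div_nonneg (mul_nonneg (dst_nonneg hμ _ _) (dst_nonneg hμ _ _)) (dst_nonneg hμ _ _)

lemma dst_marginals_pos (hμ : ∀ ω, 0 ≤ μ ω) {t : α × β × γ}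
    (ht : 0 < dst μ (fun ω => (X ω, Y ω, Z ω)) t) :
    0 < dst μ (fun ω => (X ω, Z ω)) (t.1, t.2.2) ∧ 0 < dst μ (fun ω => (Y ω, Z ω)) t.2
      ∧ 0 < dst μ Z t.2.2 :=
  ⟨ht.trans_le (dst_le_dst_comp hμ _ (fun t => (t.1, t.2.2)) t),
    ht.trans_le (dst_le_dst_comp hμ _ Prod.snd t), ht.trans_le (dst_le_dst_comp hμ _ (·.2.2) t)⟩

lemma condProdDist_pos (hμ : ∀ ω, 0 ≤ μ ω) {t : α × β × γ}
    (ht : 0 < dst μ (fun ω => (X ω, Y ω, Z ω)) t) : 0 < condProdDist μ X Y Z t :=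
  have ⟨hXZ, hYZ, hZ⟩ := dst_marginals_pos X Y Z hμ ht
  div_pos (mul_pos hXZ hYZ) hZ

lemma log_condProdDist (hμ : ∀ ω, 0 ≤ μ ω) {t : α × β × γ}
    (ht : 0 < dst μ (fun ω => (X ω, Y ω, Z ω)) t) :
    Real.log (condProdDist μ X Y Z t) = Real.log (dst μ (fun ω => (X ω, Z ω)) (t.1, t.2.2))
      + Real.log (dst μ (fun ω => (Y ω, Z ω)) t.2) - Real.log (dst μ Z t.2.2) := by
  obtain ⟨hXZ, hYZ, hZ⟩ := dst_marginals_pos X Y Z hμ ht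
  rw [condProdDist, Real.log_div (mul_pos hXZ hYZ).ne' hZ.ne', Real.log_mul hXZ.ne' hYZ.ne']

lemma cmi_eq_sum_mul_log_sub_log [Fintype α] [Fintype β] [Fintype γ] (hμ : ∀ ω, 0 ≤ μ ω) :
    cmi μ X Y Z = (∑ t, dst μ (fun ω => (X ω, Y ω, Z ω)) t
      * (Real.log (dst μ (fun ω => (X ω, Y ω, Z ω)) t) - Real.log (condProdDist μ X Y Z t)))
      / Real.log 2 := by
  calc cmi μ X Y Z
      = (∑ ω, μ ω * (Real.log (dst μ (fun ω => (X ω, Y ω, Z ω)) (X ω, Y ω, Z ω))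
        - (Real.log (dst μ (fun ω => (X ω, Z ω)) (X ω, Z ω))
        + Real.log (dst μ (fun ω => (Y ω, Z ω)) (Y ω, Z ω)) - Real.log (dst μ Z (Z ω)))))
        / Real.log 2 := by
        simp only [cmi, ent_eq_neg_sum_mul_log, mul_add, mul_sub, Finset.sum_add_distrib,
          Finset.sum_sub_distrib]
        ring
    _ = (∑ t, dst μ (fun ω => (X ω, Y ω, Z ω)) t
        * (Real.log (dst μ (fun ω => (X ω, Y ω, Z ω)) t)
        - (Real.log (dst μ (fun ω => (X ω, Z ω)) (t.1, t.2.2))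
        + Real.log (dst μ (fun ω => (Y ω, Z ω)) t.2) - Real.log (dst μ Z t.2.2))))
        / Real.log 2 := by
        rw [sum_dst_mul]
    _ = _ := by
        congr 1
        refine Finset.sum_congr rfl fun t _ => ?_
        rcases (dst_nonneg hμ (fun ω => (X ω, Y ω, Z ω)) t).eq_or_lt with ht | ht
        · simp [← ht]
        · rw [log_condProdDist X Y Z hμ ht]

end CondProdDist

lemma cmi_nonneg {α β γ : Type*} [Fintype α] [Fintype β] [Fintype γ] (hμ : ∀ ω, 0 ≤ μ ω)
    (X : Ω → α) (Y : Ω → β) (Z : Ω → γ) : 0 ≤ cmi μ X Y Z := by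
  rw [cmi_eq_sum_mul_log_sub_log X Y Z hμ]
  refine div_nonneg (sum_mul_log_sub_log_nonneg (dst_nonneg hμ _) (condProdDist_nonneg X Y Z hμ)
    (fun _ => condProdDist_pos X Y Z hμ) ?_) (Real.log_nonneg one_le_two)
  rw [sum_condProdDist, sum_dst]

section Relabel

variable {α β γ δ : Type*} [Fintype α] [Fintype β] [Fintype γ] [Fintype δ]

lemma condEnt_comp_right_of_injective (X : Ω → α) (Y : Ω → β) {e : β → γ} (he : e.Injective) :
    condEnt μ X (fun ω => e (Y ω)) = condEnt μ X Y := by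
  have hXY : ent μ (fun ω => (X ω, e (Y ω))) = ent μ (fun ω => (X ω, Y ω)) :=
    ent_comp_of_injective μ (fun ω => (X ω, Y ω)) (e := Prod.map id e)
      (Function.injective_id.prodMap he)
  rw [condEnt, condEnt, hXY, ent_comp_of_injective μ Y he]

lemma cmi_comp_right_of_injective (X : Ω → α) (Y : Ω → β) (Z : Ω → γ) {e : γ → δ}
    (he : e.Injective) : cmi μ X Y (fun ω => e (Z ω)) = cmi μ X Y Z := by
  have hXZ : ent μ (fun ω => (X ω, e (Z ω))) = ent μ (fun ω => (X ω, Z ω)) :=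
    ent_comp_of_injective μ (fun ω => (X ω, Z ω)) (e := Prod.map id e)
      (Function.injective_id.prodMap he)
  have hYZ : ent μ (fun ω => (Y ω, e (Z ω))) = ent μ (fun ω => (Y ω, Z ω)) :=
    ent_comp_of_injective μ (fun ω => (Y ω, Z ω)) (e := Prod.map id e)
      (Function.injective_id.prodMap he)
  have hXYZ : ent μ (fun ω => (X ω, Y ω, e (Z ω))) = ent μ (fun ω => (X ω, Y ω, Z ω)) :=
    ent_comp_of_injective μ (fun ω => (X ω, Y ω, Z ω)) (e := Prod.map id (Prod.map id e))
      (Function.injective_id.prodMap (Function.injective_id.prodMap he))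
  rw [cmi, cmi, hXZ, hYZ, hXYZ, ent_comp_of_injective μ Z he]

lemma cmi_comm (X : Ω → α) (Y : Ω → β) (Z : Ω → γ) : cmi μ X Y Z = cmi μ Y X Z := by
  rw [cmi, cmi, ent_left_comm]
  ring

end Relabel

section ConditioningReducesEntropy

variable {μ} (hμ : ∀ ω, 0 ≤ μ ω) {α β γ : Type*} [Fintype α] [Fintype β] [Fintype γ]
include hμ

lemma condEnt_nonneg (X : Ω → α) (Y : Ω → β) : 0 ≤ condEnt μ X Y := by
  have hXXY : ent μ (fun ω => (X ω, X ω, Y ω)) = ent μ (fun ω => (X ω, Y ω)) :=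
    ent_comp_of_injective μ (fun ω => (X ω, Y ω)) (e := fun t => (t.1, t))
      (Function.HasLeftInverse.injective ⟨Prod.snd, fun _ => rfl⟩)
  have := cmi_nonneg μ hμ X X Y
  rw [cmi, hXXY] at this
  rw [condEnt]
  linarith

lemma condEnt_prod_le (X : Ω → α) (U : Ω → β) (Y : Ω → γ) :
    condEnt μ X (fun ω => (U ω, Y ω)) ≤ condEnt μ X Y := by
  have := cmi_nonneg μ hμ X U Y
  rw [cmi] at this
  rw [condEnt, condEnt]
  linarith

lemma condEnt_prod_eq_zero {X : Ω → α} {Y : Ω → γ} (h : condEnt μ X Y = 0) (U : Ω → β) :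
    condEnt μ X (fun ω => (U ω, Y ω)) = 0 :=
  le_antisymm (h ▸ condEnt_prod_le hμ X U Y) (condEnt_nonneg hμ X _)

end ConditioningReducesEntropy

lemma cmi_prod_le_of_condEnt_eq_zero {α β γ ε : Type*} [Fintype α] [Fintype β] [Fintype γ]
    [Fintype ε] (hμ : ∀ ω, 0 ≤ μ ω) (X : Ω → α) (Y : Ω → β) (Z : Ω → γ) {G : Ω → ε}
    (hG : condEnt μ G (fun ω => (X ω, Z ω)) = 0) :
    cmi μ X Y (fun ω => (G ω, Z ω)) ≤ cmi μ X Y Z := by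
  have hXGZ : ent μ (fun ω => (X ω, G ω, Z ω)) = ent μ (fun ω => (X ω, Z ω)) := by
    rw [ent_left_comm]
    exact sub_eq_zero.mp hG
  have hXYGZ : ent μ (fun ω => (X ω, Y ω, G ω, Z ω)) = ent μ (fun ω => (X ω, Y ω, Z ω)) := by
    have hperm : ent μ (fun ω => (X ω, Y ω, G ω, Z ω)) = ent μ (fun ω => (G ω, Y ω, X ω, Z ω)) :=
      ent_comp_of_injective μ (fun ω => (G ω, Y ω, X ω, Z ω))
        (e := fun t => (t.2.2.1, t.2.1, t.1, t.2.2.2))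
        (Function.HasLeftInverse.injective ⟨fun t => (t.2.2.1, t.2.1, t.1, t.2.2.2), fun _ => rfl⟩)
    rw [hperm, ent_left_comm μ X Y Z]
    exact sub_eq_zero.mp (condEnt_prod_eq_zero hμ hG Y)
  have hGY := cmi_nonneg μ hμ G Y Z
  rw [cmi] at hGY
  rw [cmi, cmi, hXGZ, hXYGZ, ent_left_comm μ Y G Z]
  linarith

end OT

/-- if the sender's message `G` is a.s. a function of `(A,H)` and the
receiver's reply `D` is a.s. a function of `(H,G,W,B)`, then
`I(A;B|(H,G,D,W)) ≤ I(A;B|(H,W))`; consequently one round of public communication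
preserves conditional independence of the parties' private data. -/
theorem statement13 {Ω A B C D E F : Type*} [Fintype Ω] [Fintype A] [Fintype B] [Fintype C]
    [Fintype D] [Fintype E] [Fintype F]
    (μ : Ω → ℝ) (hμ : isDist μ)
    (Aa : Ω → A) (Bb : Ω → B) (W : Ω → C) (Hh : Ω → D) (Gg : Ω → E) (Dd : Ω → F)
    (h1 : condEnt μ Gg (fun ω => (Aa ω, Hh ω)) = 0)
    (h2 : condEnt μ Dd (fun ω => (Hh ω, Gg ω, W ω, Bb ω)) = 0) :
    cmi μ Aa Bb (fun ω => (Hh ω, Gg ω, Dd ω, W ω)) ≤ cmi μ Aa Bb (fun ω => (Hh ω, W ω))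
    ∧ (cmi μ Aa Bb (fun ω => (Hh ω, W ω)) = 0 →
        cmi μ Aa Bb (fun ω => (Hh ω, Gg ω, Dd ω, W ω)) = 0) := by
  have hG : condEnt μ Gg (fun ω => (Aa ω, Hh ω, W ω)) = 0 := by
    refine (condEnt_comp_right_of_injective μ Gg (fun ω => (W ω, Aa ω, Hh ω))
      (e := fun t => (t.2.1, t.2.2, t.1)) ?_).trans (condEnt_prod_eq_zero hμ.1 h1 W)
    exact Function.HasLeftInverse.injective ⟨fun t => (t.2.2, t.1, t.2.1), fun _ => rfl⟩
  have hD : condEnt μ Dd (fun ω => (Bb ω, Gg ω, Hh ω, W ω)) = 0 := by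
    refine (condEnt_comp_right_of_injective μ Dd (fun ω => (Hh ω, Gg ω, W ω, Bb ω))
      (e := fun t => (t.2.2.2, t.2.1, t.1, t.2.2.1)) ?_).trans h2
    exact Function.HasLeftInverse.injective ⟨fun t => (t.2.2.1, t.2.1, t.2.2.2, t.1), fun _ => rfl⟩
  have hmessage := cmi_prod_le_of_condEnt_eq_zero μ hμ.1 Aa Bb (fun ω => (Hh ω, W ω)) hG
  have hreply := cmi_prod_le_of_condEnt_eq_zero μ hμ.1 Bb Aa (fun ω => (Gg ω, Hh ω, W ω)) hD
  have hreorder : cmi μ Aa Bb (fun ω => (Hh ω, Gg ω, Dd ω, W ω))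
      = cmi μ Aa Bb (fun ω => (Dd ω, Gg ω, Hh ω, W ω)) :=
    cmi_comp_right_of_injective μ Aa Bb (fun ω => (Dd ω, Gg ω, Hh ω, W ω))
      (e := fun t => (t.2.2.1, t.2.1, t.1, t.2.2.2))
      (Function.HasLeftInverse.injective ⟨fun t => (t.2.2.1, t.2.1, t.1, t.2.2.2), fun _ => rfl⟩)
  rw [cmi_comm μ Bb Aa, cmi_comm μ Bb Aa] at hreply
  have hle := hreorder.trans_le (hreply.trans hmessage)
  exact ⟨hle, fun h0 => le_antisymm (hle.trans_eq h0) (cmi_nonneg μ hμ.1 _ _ _)⟩
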